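/- arXiv:math/0307375 — 12 statements merged into one kernel-verified Lean document; each statement's English description precedes it below -/
import Mathlib

section
/- The six-dimensional Euclidean Lie algebra e(3) = so(3) ⋉ ℝ³ (with so(3) acting by the standard representation) admits an integrable complex structure. Explicitly, with basis h = e₁₂ - e₂₁, f₁₃ = e₁₃ - e₃₁, f₂₃ = e₂₃ - e₃₂ of so(3) and standard basis e₁,e₂,e₃ of ℝ³, the endomorphism J defined by J h = e₃, J f₁₃ = f₂₃, J e₁ = e₂ (and J² = -id) satisfies N_J ≡ 0. -/
/-- Nijenhuis tensor of an endomorphism `J` with respect to a bracket `br`. -/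
def Nij {α : Type*} [AddCommGroup α] (br : α → α → α) (J : α → α) (x y : α) : α :=
  J (br x y) - br (J x) y - br x (J y) - J (br (J x) (J y))

/-- The Euclidean algebra `e(3) = so(3) ⋉ ℝ³`, in coordinates: an element is a pair
`(a, v)` where `a = (a₀,a₁,a₂)` are the coefficients of the basis
`h = e₁₂-e₂₁`, `f₁₃ = e₁₃-e₃₁`, `f₂₃ = e₂₃-e₃₂` of `so(3)` and `v ∈ ℝ³`. -/
abbrev E3 := (Fin 3 → ℝ) × (Fin 3 → ℝ)

/-- The bracket of `so(3)` in the basis `(h, f₁₃, f₂₃)`: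
`[h,f₁₃] = -f₂₃`, `[h,f₂₃] = f₁₃`, `[f₁₃,f₂₃] = -h`. -/
def so3br (a b : Fin 3 → ℝ) : Fin 3 → ℝ :=
  ![-(a 1 * b 2 - a 2 * b 1), a 0 * b 2 - a 2 * b 0, -(a 0 * b 1 - a 1 * b 0)]

/-- The standard action of `so(3)` on `ℝ³`:
`h e₁ = -e₂, h e₂ = e₁, f₁₃ e₁ = -e₃, f₁₃ e₃ = e₁, f₂₃ e₂ = -e₃, f₂₃ e₃ = e₂`. -/
def so3act (a v : Fin 3 → ℝ) : Fin 3 → ℝ :=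
  ![a 0 * v 1 + a 1 * v 2, -(a 0 * v 0) + a 2 * v 2, -(a 1 * v 0) - a 2 * v 1]

/-- The semidirect product bracket of `e(3)`: `[(A,u),(B,w)] = ([A,B], Aw - Bu)`. -/
def e3br (p q : E3) : E3 := (so3br p.1 q.1, so3act p.1 q.2 - so3act q.1 p.2)

/-- The endomorphism `J` of `e(3)` given by `Jh = e₃, Jf₁₃ = f₂₃, Je₁ = e₂`
(extended by `Je₃ = -h, Jf₂₃ = -f₁₃, Je₂ = -e₁`). -/
def Je3 (p : E3) : E3 := (![-(p.2 2), -(p.1 2), p.1 1], ![-(p.2 1), p.2 0, p.1 0])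

/-! Both identities are polynomial in the coordinates of `p` and `q`, so they are checked
coordinatewise. Conceptually, `N_J = 0` says that the `i`-eigenspace of `J`, spanned by
`h - i e₃`, `f₁₃ - i f₂₃` and `e₁ - i e₂`, is a complex subalgebra of `e(3) ⊗ ℂ`. -/

theorem Je3_Je3 (p : E3) : Je3 (Je3 p) = -p := by
  ext i <;> fin_cases i <;> simp [Je3]

theorem Nij_e3br_Je3 (p q : E3) : Nij e3br Je3 p q = 0 := by
  ext i <;> fin_cases i <;> simp [Nij, e3br, Je3, so3br, so3act] <;> ring

/-- `e(3)` admits an integrable complex structure: `J² = -id` and `N_J ≡ 0`. -/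
theorem stmt2 :
    (∀ p : E3, Je3 (Je3 p) = -p) ∧ ∀ p q : E3, Nij e3br Je3 p q = 0 :=
  ⟨Je3_Je3, Nij_e3br_Je3⟩
end

section
/- Let (g, J) be a real Lie algebra with an integrable complex structure J admitting a J-stable vector space decomposition g = g₀ ⊕ g₁, and let ρ : g → gl(v) be a Lie algebra representation on a real vector space v equipped with I ∈ End(v) with I² = -id. If (i) ρ(x) ∘ I = I ∘ ρ(x) for all x ∈ g₀, and (ii) ρ(Jx)(Iv) = ρ(x)v for all x ∈ g₁, v ∈ v, then the endomorphism J₊(x,v) = (Jx, Iv) is an integrable complex structure on the semidirect product g ⊕_ρ v. -/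
section CrossNij

variable {R g v : Type*} [CommRing R] [AddCommGroup g] [Module R g] [AddCommGroup v] [Module R v]
  (ρ : g →ₗ[R] Module.End R v) (J : g →ₗ[R] g) (I : Module.End R v)

def crossNij (x : g) (w : v) : v :=
  I (ρ x w) - ρ (J x) w - ρ x (I w) - I (ρ (J x) (I w))

theorem crossNij_add (x y : g) (w : v) :
    crossNij ρ J I (x + y) w = crossNij ρ J I x w + crossNij ρ J I y w := by
  simp only [crossNij, map_add, LinearMap.add_apply]
  abel

theorem crossNij_eq_zero_of_commute {x : g} (hx : ∀ w, ρ x (I w) = I (ρ x w))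
    (hJx : ∀ w, ρ (J x) (I w) = I (ρ (J x) w)) (hI2 : ∀ w, I (I w) = -w) (w : v) :
    crossNij ρ J I x w = 0 := by
  rw [crossNij, hx, hJx, hI2]
  abel

theorem crossNij_eq_zero_of_J_compat {x : g} (hJ2 : J (J x) = -x)
    (hx : ∀ w, ρ (J x) (I w) = ρ x w) (hJx : ∀ w, ρ (J (J x)) (I w) = ρ (J x) w) (w : v) :
    crossNij ρ J I x w = 0 := by
  have hxI : ρ x (I w) = -ρ (J x) w := by
    rw [← hJx, hJ2, map_neg, LinearMap.neg_apply, neg_neg]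
  rw [crossNij, hx, hxI]
  abel

theorem crossNij_eq_zero_of_isCompl {g₀ g₁ : Submodule R g} (hcompl : IsCompl g₀ g₁)
    (h₀ : ∀ x ∈ g₀, ∀ w, crossNij ρ J I x w = 0) (h₁ : ∀ x ∈ g₁, ∀ w, crossNij ρ J I x w = 0)
    (x : g) (w : v) : crossNij ρ J I x w = 0 := by
  obtain ⟨a, ha, b, hb, rfl⟩ :=
    Submodule.mem_sup.mp (hcompl.sup_eq_top ▸ Submodule.mem_top : x ∈ g₀ ⊔ g₁)
  rw [crossNij_add, h₀ a ha, h₁ b hb, add_zero]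

end CrossNij

theorem nij_semidirect_snd {R g v : Type*} [CommRing R] [LieRing g] [Module R g] [AddCommGroup v]
    [Module R v] (ρ : g →ₗ[R] Module.End R v) (J : g →ₗ[R] g) (I : Module.End R v) (p q : g × v) :
    (Nij (fun p q : g × v => (⁅p.1, q.1⁆, ρ p.1 q.2 - ρ q.1 p.2))
      (fun p : g × v => (J p.1, I p.2)) p q).2 = crossNij ρ J I p.1 q.2 - crossNij ρ J I q.1 p.2 := by
  simp only [Nij, crossNij, Prod.snd_sub, map_sub]
  abel

theorem stmt4_general {g v : Type*} [LieRing g] [LieAlgebra ℝ g] [AddCommGroup v] [Module ℝ v]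
    (ρ : g →ₗ[ℝ] Module.End ℝ v)
    (J : g →ₗ[ℝ] g) (hJ2 : ∀ x, J (J x) = -x)
    (hJint : ∀ x y : g, Nij (fun a b => ⁅a, b⁆) J x y = 0)
    (g₀ g₁ : Submodule ℝ g) (hcompl : IsCompl g₀ g₁)
    (hs0 : ∀ x ∈ g₀, J x ∈ g₀) (hs1 : ∀ x ∈ g₁, J x ∈ g₁)
    (I : Module.End ℝ v) (hI2 : ∀ w, I (I w) = -w)
    (hi : ∀ x ∈ g₀, ∀ w : v, ρ x (I w) = I (ρ x w))
    (hii : ∀ x ∈ g₁, ∀ w : v, ρ (J x) (I w) = ρ x w) :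
    (∀ p : g × v, ((J (J p.1), I (I p.2)) : g × v) = -p) ∧
    ∀ p q : g × v,
      Nij (fun p q : g × v => (⁅p.1, q.1⁆, ρ p.1 q.2 - ρ q.1 p.2))
        (fun p : g × v => (J p.1, I p.2)) p q = 0 := by
  have hcross : ∀ x w, crossNij ρ J I x w = 0 :=
    crossNij_eq_zero_of_isCompl ρ J I hcompl
      (fun x hx => crossNij_eq_zero_of_commute ρ J I (hi x hx) (hi (J x) (hs0 x hx)) hI2)
      (fun x hx => crossNij_eq_zero_of_J_compat ρ J I (hJ2 x) (hii x hx) (hii (J x) (hs1 x hx)))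
  refine ⟨fun p => Prod.ext (hJ2 p.1) (hI2 p.2), fun p q => Prod.ext (hJint p.1 q.1) ?_⟩
  rw [nij_semidirect_snd, hcross, hcross, sub_zero]
  rfl

/-- Proposition: if `g = g₀ ⊕ g₁` with `g₀, g₁` `J`-stable, `ρ(x)` commutes with `I`
for `x ∈ g₀`, and `ρ(Jx)(Iv) = ρ(x)v` for `x ∈ g₁`, then `J₊(x,v) = (Jx, Iv)` is an
integrable complex structure on the semidirect product `g ⊕_ρ v`. -/
theorem stmt4 {g v : Type*} [LieRing g] [LieAlgebra ℝ g] [AddCommGroup v] [Module ℝ v]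
    (ρ : g →ₗ[ℝ] Module.End ℝ v) (hρ : ∀ x y : g, ρ ⁅x, y⁆ = ⁅ρ x, ρ y⁆)
    (J : g →ₗ[ℝ] g) (hJ2 : ∀ x, J (J x) = -x)
    (hJint : ∀ x y : g, Nij (fun a b => ⁅a, b⁆) J x y = 0)
    (g₀ g₁ : Submodule ℝ g) (hcompl : IsCompl g₀ g₁)
    (hs0 : ∀ x ∈ g₀, J x ∈ g₀) (hs1 : ∀ x ∈ g₁, J x ∈ g₁)
    (I : Module.End ℝ v) (hI2 : ∀ w, I (I w) = -w)
    (hi : ∀ x ∈ g₀, ∀ w : v, ρ x (I w) = I (ρ x w))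
    (hii : ∀ x ∈ g₁, ∀ w : v, ρ (J x) (I w) = ρ x w) :
    (∀ p : g × v, ((J (J p.1), I (I p.2)) : g × v) = -p) ∧
    ∀ p q : g × v,
      Nij (fun p q : g × v => (⁅p.1, q.1⁆, ρ p.1 q.2 - ρ q.1 p.2))
        (fun p : g × v => (J p.1, I p.2)) p q = 0 :=
  stmt4_general ρ J hJ2 hJint g₀ g₁ hcompl hs0 hs1 I hI2 hi hii
end

section
/- In the setting of a semidirect product g ⊕_ρ v with J an integrable complex structure on g, I ∈ End(v) with I² = -id, and J₊(x,v) = (Jx,Iv): for x ∈ g and v ∈ v, the Nijenhuis tensor of J₊ satisfies N_{J₊}((x,0),(0,v)) = 0 if and only if [I,ρ(x)]v = [I,ρ(Jx)](Iv), where [I,A] = I∘A - A∘I. -/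
section SemidirectProduct

variable {R g v : Type*} [CommRing R] [LieRing g] [LieAlgebra R g] [AddCommGroup v] [Module R v]

theorem nij_semidirect_inl_inr (ρ : g →ₗ[R] Module.End R v) (J : g →ₗ[R] g)
    (I : Module.End R v) (x : g) (w : v) :
    Nij (fun p q : g × v => (⁅p.1, q.1⁆, ρ p.1 q.2 - ρ q.1 p.2))
        (fun p : g × v => (J p.1, I p.2)) (x, 0) (0, w) =
      (0, I (ρ x w) - ρ (J x) w - ρ x (I w) - I (ρ (J x) (I w))) := by
  simp [Nij]

end SemidirectProduct

theorem stmt5_general {g v : Type*} [LieRing g] [LieAlgebra ℝ g] [AddCommGroup v] [Module ℝ v]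
    (ρ : g →ₗ[ℝ] Module.End ℝ v)
    (J : g →ₗ[ℝ] g)
    (I : Module.End ℝ v) (hI2 : ∀ w, I (I w) = -w)
    (x : g) (w : v) :
    Nij (fun p q : g × v => (⁅p.1, q.1⁆, ρ p.1 q.2 - ρ q.1 p.2))
        (fun p : g × v => (J p.1, I p.2)) (x, 0) (0, w) = 0 ↔
      I (ρ x w) - ρ x (I w) = I (ρ (J x) (I w)) - ρ (J x) (I (I w)) := by
  rw [nij_semidirect_inl_inr, Prod.mk_eq_zero, hI2, map_neg, sub_neg_eq_add,
    ← sub_eq_zero (a := I (ρ x w) - _)]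
  constructor
  · exact fun h => by rw [← h.2]; abel
  · exact fun h => ⟨rfl, by rw [← h]; abel⟩

/-- For `J₊(x,v) = (Jx, Iv)` on `g ⊕_ρ v`:
`N_{J₊}((x,0),(0,v)) = 0` iff `[I,ρ(x)]v = [I,ρ(Jx)](Iv)`. -/
theorem stmt5 {g v : Type*} [LieRing g] [LieAlgebra ℝ g] [AddCommGroup v] [Module ℝ v]
    (ρ : g →ₗ[ℝ] Module.End ℝ v) (hρ : ∀ x y : g, ρ ⁅x, y⁆ = ⁅ρ x, ρ y⁆)
    (J : g →ₗ[ℝ] g) (hJ2 : ∀ x, J (J x) = -x)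
    (hJint : ∀ x y : g, Nij (fun a b => ⁅a, b⁆) J x y = 0)
    (I : Module.End ℝ v) (hI2 : ∀ w, I (I w) = -w)
    (x : g) (w : v) :
    Nij (fun p q : g × v => (⁅p.1, q.1⁆, ρ p.1 q.2 - ρ q.1 p.2))
        (fun p : g × v => (J p.1, I p.2)) (x, 0) (0, w) = 0 ↔
      I (ρ x w) - ρ x (I w) = I (ρ (J x) (I w)) - ρ (J x) (I (I w)) :=
  stmt5_general ρ J I hI2 x w
end

section
/- In the setting of a semidirect product g ⊕_ρ v with J an integrable complex structure on g, I ∈ End(v) with I² = -id, and J₋(x,v) = (Jx,-Iv): for x ∈ g and v ∈ v, the Nijenhuis tensor of J₋ satisfies N_{J₋}((x,0),(0,v)) = 0 if and only if [I,ρ(x)]v = -[I,ρ(Jx)](Iv). -/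
-- `I² = -1` is what absorbs the term `-ρ (J x) w` into the commutator `⁅I, ρ (J x)⁆ (I w)`.
theorem Nij_semidirect_inl_inr {R g v : Type*} [CommRing R] [LieRing g] [LieAlgebra R g]
    [AddCommGroup v] [Module R v] (ρ : g → Module.End R v) (J : g →ₗ[R] g)
    {I : Module.End R v} (hI2 : ∀ w, I (I w) = -w) (x : g) (w : v) :
    Nij (fun p q : g × v => (⁅p.1, q.1⁆, ρ p.1 q.2 - ρ q.1 p.2))
        (fun p : g × v => (J p.1, -I p.2)) (x, 0) (0, w) =
      (0, -(⁅I, ρ x⁆ w + ⁅I, ρ (J x)⁆ (I w))) := by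
  simp only [Nij, LieRing.of_associative_ring_bracket, LinearMap.sub_apply,
    Module.End.mul_apply, hI2, Prod.mk_sub_mk, lie_zero, map_zero, map_neg, neg_zero,
    sub_zero, Prod.mk.injEq, true_and]
  abel

theorem stmt6_general {g v : Type*} [LieRing g] [LieAlgebra ℝ g] [AddCommGroup v] [Module ℝ v]
    (ρ : g →ₗ[ℝ] Module.End ℝ v)
    (J : g →ₗ[ℝ] g)
    (I : Module.End ℝ v) (hI2 : ∀ w, I (I w) = -w)
    (x : g) (w : v) :
    Nij (fun p q : g × v => (⁅p.1, q.1⁆, ρ p.1 q.2 - ρ q.1 p.2))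
        (fun p : g × v => (J p.1, -I p.2)) (x, 0) (0, w) = 0 ↔
      I (ρ x w) - ρ x (I w) = -(I (ρ (J x) (I w)) - ρ (J x) (I (I w))) := by
  rw [Nij_semidirect_inl_inr ρ J hI2, Prod.ext_iff]
  simp only [Prod.fst_zero, Prod.snd_zero, true_and, neg_eq_zero,
    LieRing.of_associative_ring_bracket, LinearMap.sub_apply, Module.End.mul_apply]
  exact add_eq_zero_iff_eq_neg

/-- For `J₋(x,v) = (Jx, -Iv)` on `g ⊕_ρ v`:
`N_{J₋}((x,0),(0,v)) = 0` iff `[I,ρ(x)]v = -[I,ρ(Jx)](Iv)`. -/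
theorem stmt6 {g v : Type*} [LieRing g] [LieAlgebra ℝ g] [AddCommGroup v] [Module ℝ v]
    (ρ : g →ₗ[ℝ] Module.End ℝ v) (hρ : ∀ x y : g, ρ ⁅x, y⁆ = ⁅ρ x, ρ y⁆)
    (J : g →ₗ[ℝ] g) (hJ2 : ∀ x, J (J x) = -x)
    (hJint : ∀ x y : g, Nij (fun a b => ⁅a, b⁆) J x y = 0)
    (I : Module.End ℝ v) (hI2 : ∀ w, I (I w) = -w)
    (x : g) (w : v) :
    Nij (fun p q : g × v => (⁅p.1, q.1⁆, ρ p.1 q.2 - ρ q.1 p.2))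
        (fun p : g × v => (J p.1, -I p.2)) (x, 0) (0, w) = 0 ↔
      I (ρ x w) - ρ x (I w) = -(I (ρ (J x) (I w)) - ρ (J x) (I (I w))) :=
  stmt6_general ρ J I hI2 x w
end

section
/- Let g be a real Lie algebra with an integrable complex structure J, and form the tangent algebra T_ad g = g ⊕_ad g (the semidirect product of g with itself under the adjoint representation, second factor abelian). Then J₊(x,v) = (Jx, Jv) is an integrable complex structure on T_ad g. -/
/-- The bracket of the tangent algebra `T_ad g = g ⊕_ad g`. -/
def tangentBracket {α : Type*} [AddCommGroup α] (br : α → α → α) (p q : α × α) : α × α :=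
  (br p.1 q.1, br p.1 q.2 - br q.1 p.2)

theorem nij_tangentBracket {α F : Type*} [AddCommGroup α] [FunLike F α α]
    [AddMonoidHomClass F α α] (br : α → α → α) (J : F) (p q : α × α) :
    Nij (tangentBracket br) (Prod.map J J) p q =
      (Nij br J p.1 q.1, Nij br J p.1 q.2 - Nij br J q.1 p.2) := by
  ext
  · rfl
  · simp only [Nij, tangentBracket, Prod.map_fst, Prod.map_snd, Prod.snd_sub, map_sub]
    abel

/-- If `J` is an integrable complex structure on `g`, then `J₊(x,v) = (Jx, Jv)` is an
integrable complex structure on the tangent algebra `T_ad g = g ⊕_ad g`,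
whose bracket is `[(x,u),(y,w)] = ([x,y], [x,w] - [y,u])`. -/
theorem stmt7 {g : Type*} [LieRing g] [LieAlgebra ℝ g]
    (J : g →ₗ[ℝ] g) (hJ2 : ∀ x, J (J x) = -x)
    (hJint : ∀ x y : g, Nij (fun a b => ⁅a, b⁆) J x y = 0) :
    (∀ p : g × g, ((J (J p.1), J (J p.2)) : g × g) = -p) ∧
    ∀ p q : g × g,
      Nij (fun p q : g × g => (⁅p.1, q.1⁆, ⁅p.1, q.2⁆ - ⁅q.1, p.2⁆))
        (fun p : g × g => (J p.1, J p.2)) p q = 0 := by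
  refine ⟨fun p => Prod.ext (hJ2 p.1) (hJ2 p.2), fun p q => ?_⟩
  have h := nij_tangentBracket (fun a b : g => ⁅a, b⁆) J p q
  rw [hJint, hJint, hJint, sub_self] at h
  exact h
end

section
/- Let g be a real Lie algebra with an integrable complex structure J. Define J* on the dual g* by (J*α)(x) = -α(Jx), and form the cotangent algebra g ⊕_{ad*} g* under the coadjoint representation. Then J₊(x,α) = (Jx, J*α) is an integrable complex structure on g ⊕_{ad*} g*. -/
/-!
The first component of `N_{J₊}((x,α),(y,β))` is `N_J(x,y)`, and its second component, evaluated
at `z`, is `α(N_J(y,z)) - β(N_J(x,z))`; so `N_{J₊}` vanishes with `N_J`.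
-/

namespace LieAlgebra

section Cotangent

variable {R L : Type*} [CommRing R] [LieRing L] [LieAlgebra R L]

def cotangentBracket (p q : L × Module.Dual R L) : L × Module.Dual R L :=
  (⁅p.1, q.1⁆, -(q.2.comp (ad R L p.1)) - -(p.2.comp (ad R L q.1)))

def cotangentLift (J : L →ₗ[R] L) (p : L × Module.Dual R L) : L × Module.Dual R L :=
  (J p.1, -(p.2.comp J))

theorem cotangentLift_cotangentLift {J : L →ₗ[R] L} (hJ : ∀ x, J (J x) = -x)
    (p : L × Module.Dual R L) : cotangentLift J (cotangentLift J p) = -p := by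
  refine Prod.ext (hJ p.1) (LinearMap.ext fun z => ?_)
  simp [cotangentLift, hJ z]

theorem fst_Nij_cotangentLift (J : L →ₗ[R] L) (p q : L × Module.Dual R L) :
    (Nij cotangentBracket (cotangentLift J) p q).1 = Nij (fun a b => ⁅a, b⁆) J p.1 q.1 :=
  rfl

theorem snd_Nij_cotangentLift_apply (J : L →ₗ[R] L) (p q : L × Module.Dual R L) (z : L) :
    (Nij cotangentBracket (cotangentLift J) p q).2 z =
      p.2 (Nij (fun a b => ⁅a, b⁆) J q.1 z) - q.2 (Nij (fun a b => ⁅a, b⁆) J p.1 z) := by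
  simp only [Nij, cotangentBracket, cotangentLift, Prod.snd_sub, LinearMap.sub_apply,
    LinearMap.neg_apply, LinearMap.comp_apply, ad_apply, map_sub]
  abel

end Cotangent

end LieAlgebra

open LieAlgebra in
/-- If `J` is an integrable complex structure on `g`, then `J₊(x,α) = (Jx, J*α)` with
`(J*α)(x) = -α(Jx)` is an integrable complex structure on the cotangent algebra
`g ⊕_{ad*} g*`, whose bracket is `[(x,α),(y,β)] = ([x,y], ad*(x)β - ad*(y)α)` with
`(ad*(x)α)(y) = -α([x,y])`. -/
theorem stmt8 {g : Type*} [LieRing g] [LieAlgebra ℝ g]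
    (J : g →ₗ[ℝ] g) (hJ2 : ∀ x, J (J x) = -x)
    (hJint : ∀ x y : g, Nij (fun a b => ⁅a, b⁆) J x y = 0) :
    (∀ p : g × Module.Dual ℝ g,
      ((J (J p.1), -(-(p.2.comp J)).comp J) : g × Module.Dual ℝ g) = -p) ∧
    ∀ p q : g × Module.Dual ℝ g,
      Nij
        (fun p q : g × Module.Dual ℝ g =>
          (⁅p.1, q.1⁆,
            -(q.2.comp ((LieAlgebra.ad ℝ g) p.1)) - -(p.2.comp ((LieAlgebra.ad ℝ g) q.1))))
        (fun p : g × Module.Dual ℝ g => (J p.1, -(p.2.comp J))) p q = 0 := by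
  refine ⟨cotangentLift_cotangentLift hJ2, fun p q => ?_⟩
  show Nij cotangentBracket (cotangentLift J) p q = 0
  refine Prod.ext (by rw [fst_Nij_cotangentLift, hJint, Prod.fst_zero]) (LinearMap.ext fun z => ?_)
  rw [snd_Nij_cotangentLift_apply, hJint, hJint]
  simp
end

section
/- The Lie algebra aff(ℝ^{2n}) = gl(2n,ℝ) ⋉ ℝ^{2n} of affine motions of ℝ^{2n} admits an integrable complex structure, given by J₊(A, v) = (-A∘I, Iv) where I ∈ End(ℝ^{2n}) satisfies I² = -id. -/
namespace Matrix

variable {m R : Type*} [Fintype m] [DecidableEq m] [CommRing R]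

def affBracket (p q : Matrix m m R × (m → R)) : Matrix m m R × (m → R) :=
  (p.1 * q.1 - q.1 * p.1, p.1 *ᵥ q.2 - q.1 *ᵥ p.2)

def affComplexStructure (I : Matrix m m R) (p : Matrix m m R × (m → R)) :
    Matrix m m R × (m → R) :=
  (-(p.1 * I), I *ᵥ p.2)

variable {I : Matrix m m R}

theorem affComplexStructure_affComplexStructure (hI : I * I = -1) (p : Matrix m m R × (m → R)) :
    affComplexStructure I (affComplexStructure I p) = -p := by
  ext : 1
  · simp only [affComplexStructure, neg_mul, neg_neg, mul_assoc, hI, mul_neg_one, Prod.fst_neg]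
  · simp only [affComplexStructure, mulVec_mulVec, hI, neg_mulVec, one_mulVec, Prod.snd_neg]

theorem nij_affBracket_affComplexStructure (hI : I * I = -1) (p q : Matrix m m R × (m → R)) :
    Nij affBracket (affComplexStructure I) p q = 0 := by
  obtain ⟨A, u⟩ := p
  obtain ⟨B, w⟩ := q
  ext : 1
  · simp only [Nij, affBracket, affComplexStructure, Prod.fst_sub, Prod.fst_zero, sub_mul,
      neg_mul, mul_neg, neg_neg, mul_assoc, hI, mul_one, sub_neg_eq_add]
    abel
  · simp only [Nij, affBracket, affComplexStructure, Prod.snd_sub, Prod.snd_zero, mulVec_sub,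
      neg_mulVec, mulVec_mulVec, neg_mul, mul_neg, neg_neg, mul_assoc, hI, mul_one]
    abel

end Matrix

/-- The Lie algebra `aff(ℝ^{2n}) = gl(2n,ℝ) ⋉ ℝ^{2n}` with bracket
`[(A,u),(B,w)] = (AB - BA, Aw - Bu)` admits the integrable complex structure
`J₊(A,v) = (-A∘I, Iv)`, for any `I` with `I² = -id`. -/
theorem stmt10 {n : ℕ} (I : Matrix (Fin (2 * n)) (Fin (2 * n)) ℝ) (hI : I * I = -1) :
    (∀ p : Matrix (Fin (2 * n)) (Fin (2 * n)) ℝ × (Fin (2 * n) → ℝ),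
      ((-(-(p.1 * I) * I), I.mulVec (I.mulVec p.2)) :
        Matrix (Fin (2 * n)) (Fin (2 * n)) ℝ × (Fin (2 * n) → ℝ)) = -p) ∧
    ∀ p q : Matrix (Fin (2 * n)) (Fin (2 * n)) ℝ × (Fin (2 * n) → ℝ),
      Nij
        (fun p q : Matrix (Fin (2 * n)) (Fin (2 * n)) ℝ × (Fin (2 * n) → ℝ) =>
          (p.1 * q.1 - q.1 * p.1, p.1.mulVec q.2 - q.1.mulVec p.2))
        (fun p : Matrix (Fin (2 * n)) (Fin (2 * n)) ℝ × (Fin (2 * n) → ℝ) =>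
          (-(p.1 * I), I.mulVec p.2)) p q = 0 :=
  ⟨Matrix.affComplexStructure_affComplexStructure hI,
    Matrix.nij_affBracket_affComplexStructure hI⟩
end

section
/- Let g be a real Lie algebra with a flat connection ∇ : g → gl(g) (i.e., ∇ is a Lie algebra homomorphism), and let T_∇ g = g ⊕_∇ g be the tangent algebra. Then the endomorphism K(x,y) = (y,-x) is an integrable complex structure on T_∇ g if and only if ∇ is torsion-free, i.e., ∇_x y - ∇_y x = [x,y] for all x,y ∈ g. -/
namespace TangentAlgebra

variable {R g : Type*} [CommRing R] [LieRing g] [LieAlgebra R g]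

def bracket (D : g → Module.End R g) (p q : g × g) : g × g :=
  (⁅p.1, q.1⁆, D p.1 q.2 - D q.1 p.2)

def K (p : g × g) : g × g :=
  (p.2, -p.1)

def torsion (D : g → Module.End R g) (x y : g) : g :=
  D x y - D y x - ⁅x, y⁆

theorem nij_bracket_K (D : g → Module.End R g) (x u y w : g) :
    Nij (bracket D) K (x, u) (y, w) =
      (torsion D x w + torsion D u y, torsion D x y - torsion D u w) := by
  ext <;> simp only [Nij, bracket, K, torsion, map_neg, Prod.mk_sub_mk] <;> abel

theorem nij_K_eq_zero_iff (D : g → Module.End R g) :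
    (∀ p q : g × g, Nij (bracket D) K p q = 0) ↔ ∀ x y : g, torsion D x y = 0 := by
  refine ⟨fun h x y => ?_, fun h ⟨x, u⟩ ⟨y, w⟩ => ?_⟩
  · simpa [nij_bracket_K, torsion] using congrArg Prod.snd (h (x, 0) (y, 0))
  · simp [nij_bracket_K, h]

end TangentAlgebra

open TangentAlgebra in
theorem stmt11_general {g : Type*} [LieRing g] [LieAlgebra ℝ g]
    (D : g →ₗ[ℝ] Module.End ℝ g) :
    (∀ p q : g × g,
        Nij (fun p q : g × g => (⁅p.1, q.1⁆, D p.1 q.2 - D q.1 p.2))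
          (fun p : g × g => (p.2, -p.1)) p q = 0) ↔
      ∀ x y : g, D x y - D y x = ⁅x, y⁆ :=
  (nij_K_eq_zero_iff D).trans <| forall₂_congr fun _ _ => sub_eq_zero

/-- For a flat connection `∇` on `g`, the endomorphism `K(x,y) = (y,-x)` of the tangent
algebra `T_∇ g = g ⊕_∇ g` (bracket `[(x,u),(y,w)] = ([x,y], ∇ₓw - ∇_y u)`) is an
integrable complex structure iff `∇` is torsion-free. -/
theorem stmt11 {g : Type*} [LieRing g] [LieAlgebra ℝ g]
    (D : g →ₗ[ℝ] Module.End ℝ g) (hflat : ∀ x y : g, D ⁅x, y⁆ = ⁅D x, D y⁆) :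
    (∀ p q : g × g,
        Nij (fun p q : g × g => (⁅p.1, q.1⁆, D p.1 q.2 - D q.1 p.2))
          (fun p : g × g => (p.2, -p.1)) p q = 0) ↔
      ∀ x y : g, D x y - D y x = ⁅x, y⁆ :=
  stmt11_general D
end

section
/- Let u be a real Lie algebra with an integrable complex structure K such that u = g ⊕ K(g) where g is a subalgebra of u and K(g) is an ideal of u. Then K(g) is an abelian ideal. -/
/-!
For `x, y ∈ g` the vector `K⁅Kx, Ky⁆` lies in `K(K(g)) = g`, because `K(g)` is an ideal.
The vanishing of the Nijenhuis tensor rewrites it as `K⁅x, y⁆ - ⁅Kx, y⁆ - ⁅x, Ky⁆`, which lies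
in `K(g)`. Since `g ∩ K(g) = 0` and `K` is injective, `⁅Kx, Ky⁆ = 0`.
-/

theorem Nij_eq_zero_iff {α : Type*} [AddCommGroup α] (br : α → α → α) (J : α → α) (x y : α) :
    Nij br J x y = 0 ↔ J (br (J x) (J y)) = J (br x y) - br (J x) y - br x (J y) := by
  rw [Nij, sub_eq_zero, eq_comm]

section ComplexStructure

variable {R M : Type*} [Ring R] [AddCommGroup M] [Module R M] {K : M →ₗ[R] M}

theorem injective_of_apply_apply_eq_neg (hK2 : ∀ x, K (K x) = -x) : Function.Injective K :=
  fun a b hab => by simpa only [hK2, neg_inj] using congrArg K hab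

theorem apply_mem_of_mem_map (hK2 : ∀ x, K (K x) = -x) {p : Submodule R M} {y : M}
    (hy : y ∈ p.map K) : K y ∈ p := by
  obtain ⟨x, hx, rfl⟩ := hy
  rw [hK2]
  exact p.neg_mem hx

end ComplexStructure

theorem Submodule.lie_mem_left_of_lie_mem_right {R L : Type*} [CommRing R] [LieRing L]
    [LieAlgebra R L] {p : Submodule R L} (hp : ∀ x : L, ∀ y ∈ p, ⁅x, y⁆ ∈ p) {x : L}
    (hx : x ∈ p) (y : L) : ⁅x, y⁆ ∈ p := by
  rw [← lie_skew]
  exact p.neg_mem (hp y x hx)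

/-- If `u = g ⊕ K(g)` with `K` an integrable complex structure, `g` a subalgebra and
`K(g)` an ideal, then `K(g)` is an abelian ideal. -/
theorem stmt12 {u : Type*} [LieRing u] [LieAlgebra ℝ u]
    (K : u →ₗ[ℝ] u) (hK2 : ∀ x, K (K x) = -x)
    (hKint : ∀ x y : u, Nij (fun a b => ⁅a, b⁆) K x y = 0)
    (g : LieSubalgebra ℝ u)
    (hideal : ∀ x : u, ∀ y ∈ (g.toSubmodule).map K, ⁅x, y⁆ ∈ (g.toSubmodule).map K)
    (hcompl : IsCompl g.toSubmodule ((g.toSubmodule).map K)) :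
    ∀ a ∈ (g.toSubmodule).map K, ∀ b ∈ (g.toSubmodule).map K, ⁅a, b⁆ = (0 : u) := by
  rintro a ⟨x, hx, rfl⟩ b ⟨y, hy, rfl⟩
  have hKx : K x ∈ g.toSubmodule.map K := Submodule.mem_map_of_mem hx
  have hKy : K y ∈ g.toSubmodule.map K := Submodule.mem_map_of_mem hy
  have hmem_g : K ⁅K x, K y⁆ ∈ g.toSubmodule := apply_mem_of_mem_map hK2 (hideal _ _ hKy)
  have hmem_Kg : K ⁅K x, K y⁆ ∈ g.toSubmodule.map K := by
    rw [(Nij_eq_zero_iff _ _ x y).1 (hKint x y)]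
    refine sub_mem (sub_mem (Submodule.mem_map_of_mem (g.lie_mem hx hy)) ?_) (hideal x _ hKy)
    exact Submodule.lie_mem_left_of_lie_mem_right hideal hKx y
  have hzero : K ⁅K x, K y⁆ = 0 :=
    Submodule.disjoint_def.1 hcompl.disjoint _ hmem_g hmem_Kg
  exact injective_of_apply_apply_eq_neg hK2 (by rw [hzero, map_zero])
end

section
/- Let u be a real Lie algebra with an integrable complex structure K such that u = g ⊕ K(g) where g is a subalgebra and K(g) is an ideal of u. Then the map ∇ : g → gl(g), ∇_x = -K ∘ ad(x) ∘ K (restricted to g via the decomposition), is a flat torsion-free connection on g, i.e., ∇_{[x,y]} = [∇_x, ∇_y] and ∇_x y - ∇_y x = [x,y], and u is isomorphic as a Lie algebra to the tangent algebra T_∇ g = g ⊕_∇ g via (x, Ky) ↦ (x, y). -/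
/-!
The Nijenhuis condition, read on `x, y ∈ g`, writes `⁅K x, K y⁆` as an element of `g`
(using that `K ⁅a, K b⁆ ∈ g` since `K(g)` is an ideal); it also lies in the ideal `K(g)`,
so `K(g)` is abelian. With `⁅K x, K y⁆ = 0` the same identity is exactly torsion-freeness of
`∇ₓ y = -K ⁅x, K y⁆`, flatness is the Jacobi identity since `K ∇ₓ y = ⁅x, K y⁆`, and expanding
`⁅x₁ + K y₁, x₂ + K y₂⁆` by bilinearity gives the bracket of `T_∇ g`.
-/

section ComplexStructure

variable {R u : Type*} [CommRing R] [LieRing u] [LieAlgebra R u] {K : u →ₗ[R] u}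

def complexConnection (K : u →ₗ[R] u) (x y : u) : u :=
  -K ⁅x, K y⁆

theorem K_complexConnection (hK2 : ∀ x, K (K x) = -x) (x y : u) :
    K (complexConnection K x y) = ⁅x, K y⁆ := by
  rw [complexConnection, map_neg, hK2, neg_neg]

theorem complexConnection_lie (hK2 : ∀ x, K (K x) = -x) (x y z : u) :
    complexConnection K ⁅x, y⁆ z =
      complexConnection K x (complexConnection K y z) -
        complexConnection K y (complexConnection K x z) := by
  simp only [complexConnection, map_neg, hK2, neg_neg, lie_lie, map_sub]
  abel

theorem lie_K_K_of_nij_eq_zero (hK2 : ∀ x, K (K x) = -x) {x y : u}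
    (hN : Nij (fun a b => ⁅a, b⁆) K x y = 0) :
    ⁅K x, K y⁆ = ⁅x, y⁆ + K ⁅K x, y⁆ + K ⁅x, K y⁆ := by
  have h := congrArg K hN
  simp only [Nij, map_sub, hK2, map_zero] at h
  rw [← sub_eq_zero, ← h]
  abel

theorem complexConnection_sub_swap (hK2 : ∀ x, K (K x) = -x) {x y : u}
    (hN : Nij (fun a b => ⁅a, b⁆) K x y = 0) (hKK : ⁅K x, K y⁆ = 0) :
    complexConnection K x y - complexConnection K y x = ⁅x, y⁆ := by
  have h := lie_K_K_of_nij_eq_zero hK2 hN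
  rw [hKK, ← lie_skew (K x) y, map_neg] at h
  rw [complexConnection, complexConnection, ← sub_eq_zero, ← neg_eq_zero, h]
  abel

theorem complexConnection_mem {p : Submodule R u} (hK2 : ∀ x, K (K x) = -x)
    (hideal : ∀ x : u, ∀ y ∈ p.map K, ⁅x, y⁆ ∈ p.map K) (x : u) {y : u} (hy : y ∈ p) :
    complexConnection K x y ∈ p := by
  obtain ⟨z, hz, hKz⟩ := hideal x (K y) ⟨y, hy, rfl⟩
  rwa [complexConnection, ← hKz, hK2, neg_neg]

theorem lie_K_K_eq_zero {g : LieSubalgebra R u} (hK2 : ∀ x, K (K x) = -x)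
    (hKint : ∀ x y : u, Nij (fun a b => ⁅a, b⁆) K x y = 0)
    (hideal : ∀ x : u, ∀ y ∈ (g.toSubmodule).map K, ⁅x, y⁆ ∈ (g.toSubmodule).map K)
    (hdisj : Disjoint g.toSubmodule ((g.toSubmodule).map K)) {x y : u} (hx : x ∈ g)
    (hy : y ∈ g) : ⁅K x, K y⁆ = 0 := by
  have hxy := complexConnection_mem hK2 hideal x hy
  have hyx := complexConnection_mem hK2 hideal y hx
  have hmem_g : ⁅K x, K y⁆ ∈ g.toSubmodule := by
    rw [lie_K_K_of_nij_eq_zero hK2 (hKint x y), ← lie_skew (K x) y, map_neg]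
    exact add_mem (add_mem (g.lie_mem hx hy) hyx)
      (by simpa only [complexConnection, neg_neg] using neg_mem hxy)
  exact Submodule.disjoint_def.mp hdisj _ hmem_g (hideal _ _ ⟨y, hy, rfl⟩)

theorem lie_add_K_add_K (hK2 : ∀ x, K (K x) = -x) (x₁ y₁ x₂ y₂ : u)
    (hKK : ⁅K y₁, K y₂⁆ = 0) :
    ⁅x₁ + K y₁, x₂ + K y₂⁆ =
      ⁅x₁, x₂⁆ + K (complexConnection K x₁ y₂ - complexConnection K x₂ y₁) := by
  rw [map_sub, K_complexConnection hK2, K_complexConnection hK2, lie_add, add_lie, add_lie,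
    hKK, ← lie_skew x₂]
  abel

theorem bijective_add_K_of_isCompl {p : Submodule R u} (hK : Function.Injective K)
    (hcompl : IsCompl p (p.map K)) :
    Function.Bijective (fun q : p × p => (q.1 : u) + K (q.2 : u)) :=
  (Submodule.prodEquivOfIsCompl _ _ hcompl).bijective.comp
    (Function.bijective_id.prodMap (Submodule.equivMapOfInjective K hK p).bijective)

end ComplexStructure

/-- If `u = g ⊕ K(g)` with `K` an integrable complex structure, `g` a subalgebra and
`K(g)` an ideal, then `∇ₓ = -K ∘ ad(x) ∘ K` is a flat torsion-free connection on `g` and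
`u` is isomorphic to the tangent algebra `T_∇ g` via `(x,y) ↦ x + K y`. -/
theorem stmt13 {u : Type*} [LieRing u] [LieAlgebra ℝ u]
    (K : u →ₗ[ℝ] u) (hK2 : ∀ x, K (K x) = -x)
    (hKint : ∀ x y : u, Nij (fun a b => ⁅a, b⁆) K x y = 0)
    (g : LieSubalgebra ℝ u)
    (hideal : ∀ x : u, ∀ y ∈ (g.toSubmodule).map K, ⁅x, y⁆ ∈ (g.toSubmodule).map K)
    (hcompl : IsCompl g.toSubmodule ((g.toSubmodule).map K)) :
    ∃ D : g → g → g,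
      (∀ x y : g, ((D x y : u)) = -K ⁅(x : u), K (y : u)⁆) ∧
      (∀ x y z : g, D ⁅x, y⁆ z = D x (D y z) - D y (D x z)) ∧
      (∀ x y : g, D x y - D y x = ⁅x, y⁆) ∧
      Function.Bijective (fun p : g × g => ((p.1 : u) + K (p.2 : u))) ∧
      (∀ p q : g × g,
        ((⁅p.1, q.1⁆ : g) : u) + K ((D p.1 q.2 - D q.1 p.2 : g) : u) =
          ⁅(p.1 : u) + K (p.2 : u), (q.1 : u) + K (q.2 : u)⁆) := by
  have hK : Function.Injective K := fun a b h => neg_injective (by rw [← hK2 a, ← hK2 b, h])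
  have hKK (x y : g) : ⁅K (x : u), K (y : u)⁆ = 0 :=
    lie_K_K_eq_zero hK2 hKint hideal hcompl.disjoint x.2 y.2
  refine ⟨fun x y => ⟨complexConnection K x y, complexConnection_mem hK2 hideal x y.2⟩,
    fun _ _ => rfl, fun x y z => Subtype.ext (complexConnection_lie hK2 x y z),
    fun x y => Subtype.ext (complexConnection_sub_swap hK2 (hKint x y) (hKK x y)),
    bijective_add_K_of_isCompl hK hcompl,
    fun p q => (lie_add_K_add_K hK2 p.1 p.2 q.1 q.2 (hKK p.2 q.2)).symm⟩
end

section
/- Let ∇ be a flat connection on a real Lie algebra g and ∇* the contragredient representation on g*, (∇*_x α)(y) = -α(∇_x y). Then the 2-form Ω on the cotangent algebra T*_∇ g = g ⊕_{∇*} g* defined by Ω((x,α),(y,β)) = α(y) - β(x) is closed (dΩ = 0) if and only if ∇ is torsion-free. -/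
/-!
Expanding the three terms, the cyclic sum `dΩ((x,α),(y,β),(z,γ))` collapses to
`-(α(T(y,z)) + β(T(z,x)) + γ(T(x,y)))`, where `T(x,y) = ∇ₓy - ∇ᵧx - [x,y]` is the torsion.
It vanishes for all arguments iff every covector kills every value of `T`, and covectors
separate the points of `g`.
-/

namespace LieAlgebra.Cotangent

variable {R L : Type*} [CommRing R] [LieRing L] [LieAlgebra R L]

def torsion (D : L →ₗ[R] Module.End R L) (x y : L) : L :=
  D x y - D y x - ⁅x, y⁆

/-- The bracket of `T*_∇ L = L ⊕_{∇*} L*`, with `∇*ₓα = -α ∘ ∇ₓ`. -/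
def bracket (D : L →ₗ[R] Module.End R L) (p q : L × Module.Dual R L) :
    L × Module.Dual R L :=
  (⁅p.1, q.1⁆, -(q.2.comp (D p.1)) - -(p.2.comp (D q.1)))

def form (p q : L × Module.Dual R L) : R :=
  p.2 q.1 - q.2 p.1

/-- The Chevalley–Eilenberg differential of a 2-form with trivial coefficients. -/
def diff {V : Type*} (br : V → V → V) (Ω : V → V → R) (a b c : V) : R :=
  Ω a (br b c) + Ω b (br c a) + Ω c (br a b)

theorem diff_form (D : L →ₗ[R] Module.End R L) (a b c : L × Module.Dual R L) :
    diff (bracket D) form a b c =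
      -(a.2 (torsion D b.1 c.1) + b.2 (torsion D c.1 a.1) + c.2 (torsion D a.1 b.1)) := by
  simp only [diff, form, bracket, torsion, LinearMap.sub_apply, LinearMap.neg_apply,
    LinearMap.comp_apply, map_sub]
  ring

theorem diff_form_eq_zero_iff [Module.Projective R L] (D : L →ₗ[R] Module.End R L) :
    (∀ a b c, diff (bracket D) form a b c = 0) ↔ ∀ x y : L, torsion D x y = 0 := by
  refine ⟨fun h x y => ?_, fun h a b c => by simp [diff_form, h]⟩
  refine (Module.forall_dual_apply_eq_zero_iff R _).mp fun φ => ?_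
  simpa [diff_form] using h (0, φ) (x, 0) (y, 0)

end LieAlgebra.Cotangent

open LieAlgebra.Cotangent in
theorem stmt16_general {g : Type*} [LieRing g] [LieAlgebra ℝ g]
    (D : g →ₗ[ℝ] Module.End ℝ g) :
    (∀ a b c : g × Module.Dual ℝ g,
      (fun p q : g × Module.Dual ℝ g => p.2 q.1 - q.2 p.1) a
          ((fun p q : g × Module.Dual ℝ g =>
            ((⁅p.1, q.1⁆ : g), -(q.2.comp (D p.1)) - -(p.2.comp (D q.1)))) b c) +
        (fun p q : g × Module.Dual ℝ g => p.2 q.1 - q.2 p.1) b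
          ((fun p q : g × Module.Dual ℝ g =>
            ((⁅p.1, q.1⁆ : g), -(q.2.comp (D p.1)) - -(p.2.comp (D q.1)))) c a) +
        (fun p q : g × Module.Dual ℝ g => p.2 q.1 - q.2 p.1) c
          ((fun p q : g × Module.Dual ℝ g =>
            ((⁅p.1, q.1⁆ : g), -(q.2.comp (D p.1)) - -(p.2.comp (D q.1)))) a b) = 0) ↔
      ∀ x y : g, D x y - D y x = ⁅x, y⁆ :=
  (diff_form_eq_zero_iff D).trans (forall₂_congr fun _ _ => sub_eq_zero)

/-- For a flat connection `∇` on `g` and the contragredient representation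
`∇*ₓα = -α ∘ ∇ₓ`, the 2-form `Ω((x,α),(y,β)) = α(y) - β(x)` on the cotangent algebra
`T*_∇ g = g ⊕_{∇*} g*` is closed iff `∇` is torsion-free. -/
theorem stmt16 {g : Type*} [LieRing g] [LieAlgebra ℝ g]
    (D : g →ₗ[ℝ] Module.End ℝ g) (hflat : ∀ x y : g, D ⁅x, y⁆ = ⁅D x, D y⁆) :
    (∀ a b c : g × Module.Dual ℝ g,
      (fun p q : g × Module.Dual ℝ g => p.2 q.1 - q.2 p.1) a
          ((fun p q : g × Module.Dual ℝ g =>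
            ((⁅p.1, q.1⁆ : g), -(q.2.comp (D p.1)) - -(p.2.comp (D q.1)))) b c) +
        (fun p q : g × Module.Dual ℝ g => p.2 q.1 - q.2 p.1) b
          ((fun p q : g × Module.Dual ℝ g =>
            ((⁅p.1, q.1⁆ : g), -(q.2.comp (D p.1)) - -(p.2.comp (D q.1)))) c a) +
        (fun p q : g × Module.Dual ℝ g => p.2 q.1 - q.2 p.1) c
          ((fun p q : g × Module.Dual ℝ g =>
            ((⁅p.1, q.1⁆ : g), -(q.2.comp (D p.1)) - -(p.2.comp (D q.1)))) a b) = 0) ↔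
      ∀ x y : g, D x y - D y x = ⁅x, y⁆ :=
  stmt16_general D
end

section
/- Let g be a real Lie algebra with a nondegenerate symmetric bilinear form ⟨·,·⟩ and a flat torsion-free connection ∇ that is metric (⟨∇_x y, z⟩ + ⟨y, ∇_x z⟩ = 0 for all x,y,z). Then on the tangent algebra T_∇ g, the 2-form ω((x,y),(x',y')) = ⟨y,x'⟩ - ⟨y',x⟩ is a symplectic structure, K(x,y) = (y,-x) is an integrable complex structure, and ω((x,y),(x',y')) = B(K(x,y),(x',y')) where B((x,y),(x',y')) = ⟨x,x'⟩ + ⟨y,y'⟩; in particular (K,ω) is a pseudo-Kähler structure on T_∇ g. -/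
/-- If `⟨·,·⟩` is a nondegenerate symmetric bilinear form on `g` whose Levi-Civita
connection `∇` is flat (and torsion-free), then on `T_∇ g` the 2-form
`ω((x,y),(x',y')) = ⟨y,x'⟩ - ⟨y',x⟩` is symplectic, `K(x,y) = (y,-x)` is an integrable
complex structure, and `ω(p,q) = B(Kp,q)` with `B((x,y),(x',y')) = ⟨x,x'⟩ + ⟨y,y'⟩`;
i.e. `(K,ω)` is a pseudo-Kähler structure on `T_∇ g`. -/
theorem stmt18 {g : Type*} [LieRing g] [LieAlgebra ℝ g]
    (B : g →ₗ[ℝ] g →ₗ[ℝ] ℝ) (hsymm : ∀ x y : g, B x y = B y x)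
    (hnd : ∀ x : g, (∀ y : g, B x y = 0) → x = 0)
    (D : g →ₗ[ℝ] Module.End ℝ g) (hflat : ∀ x y : g, D ⁅x, y⁆ = ⁅D x, D y⁆)
    (htf : ∀ x y : g, D x y - D y x = ⁅x, y⁆)
    (hmetric : ∀ x y z : g, B (D x y) z + B y (D x z) = 0) :
    -- ω is skew:
    (∀ p q : g × g, B p.2 q.1 - B q.2 p.1 = -(B q.2 p.1 - B p.2 q.1)) ∧
    -- ω is non-degenerate:
    (∀ p : g × g, (∀ q : g × g, B p.2 q.1 - B q.2 p.1 = 0) → p = 0) ∧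
    -- ω is closed:
    (∀ a b c : g × g,
      (B a.2 ⁅b.1, c.1⁆ - B (D b.1 c.2 - D c.1 b.2) a.1) +
        (B b.2 ⁅c.1, a.1⁆ - B (D c.1 a.2 - D a.1 c.2) b.1) +
        (B c.2 ⁅a.1, b.1⁆ - B (D a.1 b.2 - D b.1 a.2) c.1) = 0) ∧
    -- K is an integrable complex structure:
    (∀ p : g × g, ((-p.1, -p.2) : g × g) = -p) ∧
    (∀ p q : g × g,
      Nij (fun p q : g × g => (⁅p.1, q.1⁆, D p.1 q.2 - D q.1 p.2))
        (fun p : g × g => (p.2, -p.1)) p q = 0) ∧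
    -- ω(p,q) = B(Kp, q):
    (∀ p q : g × g, B p.2 q.1 - B q.2 p.1 = B p.2 q.1 + B (-p.1) q.2) := by
  refine ⟨fun p q => by ring, ?_, ?_, fun p => rfl, ?_, ?_⟩
  · rintro ⟨x, y⟩ h
    have hy : y = 0 := hnd y (fun z => by simpa using h (z, 0))
    have hx : x = 0 := hnd x (fun z => by
      have := h (0, z); simp only at this
      simp only [map_zero, LinearMap.zero_apply, hsymm x z] at this ⊢
      linarith)
    simp [hx, hy, Prod.ext_iff]
  · intro a b c
    simp only [← htf, map_sub, LinearMap.sub_apply]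
    linear_combination -hmetric b.1 c.2 a.1 + hmetric c.1 b.2 a.1 -
      hmetric c.1 a.2 b.1 + hmetric a.1 c.2 b.1 -
      hmetric a.1 b.2 c.1 + hmetric b.1 a.2 c.1
  · intro p q
    simp only [Nij, ← htf, map_neg, map_sub, LinearMap.sub_apply, LinearMap.neg_apply,
      Prod.ext_iff, Prod.mk_sub_mk, Prod.fst_sub, Prod.snd_sub, Prod.fst_zero, Prod.snd_zero]
    constructor <;> abel
  · intro p q
    simp only [map_neg, LinearMap.neg_apply, hsymm q.2 p.1]
    ring
end
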